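/- arXiv:1910.08421 — 2 statements merged into one kernel-verified Lean document; each statement's English description precedes it below -/
import Mathlib

section
/- Let (Δ,G,ω,ζ) be a generalised voltage graph and T a spanning tree of Δ. Then there exist a weight function ω' and a voltage assignment ζ' with ζ'(x) = 1 for every dart x of T, such that (Δ,G,ω',ζ') is a generalised voltage graph and GenCov(Δ,G,ω,ζ) ≅ GenCov(Δ,G,ω',ζ'). -/
/-!
Fix a base vertex `v₀` and, for every vertex `v`, the unique reduced walk inside the tree from
`v₀` to `v`; let `c v` be the inverse of its voltage. Switching by `c` (conjugating the weights
at `v` by `c v` and replacing `ζ x` by `c (term x) * ζ x * (c (beg x))⁻¹`) yields an isomorphic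
cover via `(v, ω(v)g) ↦ (v, ω'(v) c(v) g)`. For a tree dart `x` the tree walk to one end of `x`
is the walk to the other end extended by `x` or by `x⁻¹`, so the switched voltage of `x` is
trivial or conjugate to `ζ(x)ζ(x⁻¹)`; either way it lies in `ω'(x⁻¹)`. Finally `ζ x` may be
replaced by `h * ζ x` for any `h ∈ ω(x⁻¹)` without changing the cover, since the cover only
sees the coset `ω(x⁻¹) ζ(x) g`.
-/

/-- A graph in the sense of Malnič–Nedela–Škoviera: vertices, darts,
an initial-vertex function and an involutory dart-reversal. -/
structure PreGraph (V D : Type*) where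
  beg : D → V
  inv : D → D
  inv_inv : ∀ x, inv (inv x) = x

/-- The terminal vertex of a dart. -/
def PreGraph.term {V D : Type*} (Δ : PreGraph V D) (x : D) : V := Δ.beg (Δ.inv x)

/-- A generalised voltage graph on a graph `Δ`: a weight function
(given on vertices by `ωv` and on darts by `ωd`) and a voltage assignment `ζ`
satisfying the three defining conditions. -/
structure GenVoltage (V D : Type*) (G : Type*) [Group G] (Δ : PreGraph V D) where
  ωv : V → Subgroup G
  ωd : D → Subgroup G
  ζ : D → G
  wle : ∀ x, ωd x ≤ ωv (Δ.beg x)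
  wconj : ∀ x g, g ∈ ωd x ↔ ζ x * g * (ζ x)⁻¹ ∈ ωd (Δ.inv x)
  wcyc : ∀ x, ζ (Δ.inv x) * ζ x ∈ ωd x

namespace GenVoltage

variable {V D G : Type*} [Group G] {Δ : PreGraph V D} (Θ : GenVoltage V D G Δ)

/-- Vertices of the generalised cover: pairs `(v, ω(v)g)` of a vertex of `Δ`
and a right coset of its weight group. -/
abbrev CovV := Σ v : V, Quotient (QuotientGroup.rightRel (Θ.ωv v))

/-- Darts of the generalised cover: pairs `(x, ω(x)g)`. -/
abbrev CovD := Σ x : D, Quotient (QuotientGroup.rightRel (Θ.ωd x))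

/-- The cover vertex `(v, ω(v)g)`. -/
def vmk (v : V) (g : G) : Θ.CovV := ⟨v, Quotient.mk _ g⟩

/-- The cover dart `(x, ω(x)g)`. -/
def dmk (x : D) (g : G) : Θ.CovD := ⟨x, Quotient.mk _ g⟩

/-- `beg` of the cover: `(x, ω(x)g) ↦ (beg x, ω(beg x)g)`. -/
def covBeg : Θ.CovD → Θ.CovV :=
  fun p => ⟨Δ.beg p.1, Quotient.map id (fun g h hgh => by
    have h1 : h * g⁻¹ ∈ Θ.ωd p.1 := QuotientGroup.rightRel_apply.mp hgh
    exact QuotientGroup.rightRel_apply.mpr (Θ.wle p.1 h1)) p.2⟩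

/-- `inv` of the cover: `(x, ω(x)g) ↦ (x⁻¹, ω(x⁻¹)ζ(x)g)`. -/
def covInv : Θ.CovD → Θ.CovD :=
  fun p => ⟨Δ.inv p.1, Quotient.map (fun g => Θ.ζ p.1 * g) (fun g h hgh => by
    have h1 : h * g⁻¹ ∈ Θ.ωd p.1 := QuotientGroup.rightRel_apply.mp hgh
    have h2 := (Θ.wconj p.1 (h * g⁻¹)).1 h1
    exact QuotientGroup.rightRel_apply.mpr (by simpa [mul_assoc, mul_inv_rev] using h2)) p.2⟩

/-- Terminal vertex of a cover dart. -/
def covTerm : Θ.CovD → Θ.CovV := fun p => Θ.covBeg (Θ.covInv p)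

/-- Right translation by `h` on the cover: `(x, ω(x)g) ↦ (x, ω(x)gh)`, on vertices. -/
def covRightV (h : G) : Θ.CovV → Θ.CovV :=
  fun p => ⟨p.1, Quotient.map (fun g => g * h) (fun a b hab => by
    have h1 := QuotientGroup.rightRel_apply.mp hab
    exact QuotientGroup.rightRel_apply.mpr (by simpa [mul_assoc, mul_inv_rev] using h1)) p.2⟩

/-- Right translation by `h` on the cover, on darts. -/
def covRightD (h : G) : Θ.CovD → Θ.CovD :=
  fun p => ⟨p.1, Quotient.map (fun g => g * h) (fun a b hab => by
    have h1 := QuotientGroup.rightRel_apply.mp hab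
    exact QuotientGroup.rightRel_apply.mpr (by simpa [mul_assoc, mul_inv_rev] using h1)) p.2⟩

end GenVoltage

/-- Walks with respect to abstract initial/terminal vertex functions `B`, `T`:
`WalkBT B T u v l` means `l` is a walk from `u` to `v`. -/
inductive WalkBT {Vt Dt : Type*} (B T : Dt → Vt) : Vt → Vt → List Dt → Prop
  | nil (v : Vt) : WalkBT B T v v []
  | cons (x : Dt) {v : Vt} {l : List Dt} :
      WalkBT B T (T x) v l → WalkBT B T (B x) v (x :: l)


/-- `S` is (the dart set of) a spanning tree of `Δ`: closed under dart-reversal,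
spanning and connected (any two vertices are joined by a walk inside `S`),
and acyclic (the only reduced closed walks inside `S` are trivial). -/
def IsSpanningTree {V D : Type*} (Δ : PreGraph V D) (S : Set D) : Prop :=
  (∀ x ∈ S, Δ.inv x ∈ S) ∧
  (∀ u v : V, ∃ l : List D, WalkBT Δ.beg Δ.term u v l ∧ ∀ x ∈ l, x ∈ S) ∧
  (∀ (v : V) (l : List D), WalkBT Δ.beg Δ.term v v l →
      List.Chain' (fun a b => b ≠ Δ.inv a) l → (∀ x ∈ l, x ∈ S) → l = [])

namespace PreGraph

variable {V D : Type*} (Δ : PreGraph V D)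

abbrev IsWalk (u v : V) (l : List D) : Prop := WalkBT Δ.beg Δ.term u v l

def IsReduced (l : List D) : Prop := l.IsChain fun a b => b ≠ Δ.inv a

def IsReducedWalkIn (S : Set D) (u v : V) (l : List D) : Prop :=
  Δ.IsWalk u v l ∧ Δ.IsReduced l ∧ ∀ x ∈ l, x ∈ S

variable {Δ} {S : Set D} {u v w : V} {x : D} {l l₁ l₂ : List D}

theorem term_inv (x : D) : Δ.term (Δ.inv x) = Δ.beg x := by
  rw [term, Δ.inv_inv]

theorem isWalk_cons_iff : Δ.IsWalk u v (x :: l) ↔ u = Δ.beg x ∧ Δ.IsWalk (Δ.term x) v l :=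
  ⟨fun | .cons _ h => ⟨rfl, h⟩, fun ⟨hu, h⟩ => hu ▸ .cons x h⟩

theorem isWalk_singleton (x : D) : Δ.IsWalk (Δ.beg x) (Δ.term x) [x] :=
  .cons x (.nil _)

theorem IsWalk.eq_of_nil (h : Δ.IsWalk u v []) : u = v := by
  cases h; rfl

theorem IsWalk.append (h₁ : Δ.IsWalk u w l₁) (h₂ : Δ.IsWalk w v l₂) :
    Δ.IsWalk u v (l₁ ++ l₂) := by
  induction h₁ with
  | nil => exact h₂
  | cons x _ ih => exact .cons x (ih h₂)

theorem IsWalk.of_append (h : Δ.IsWalk u v (l₁ ++ l₂)) :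
    ∃ w, Δ.IsWalk u w l₁ ∧ Δ.IsWalk w v l₂ := by
  induction l₁ generalizing u with
  | nil => exact ⟨u, .nil u, h⟩
  | cons x t ih =>
    rw [List.cons_append, isWalk_cons_iff] at h
    obtain ⟨w, ht, hw⟩ := ih h.2
    obtain rfl := h.1
    exact ⟨w, .cons x ht, hw⟩

theorem IsWalk.reverse (h : Δ.IsWalk u v l) : Δ.IsWalk v u (l.map Δ.inv).reverse := by
  induction h with
  | nil v => exact .nil v
  | cons x _ ih =>
    have hx : Δ.IsWalk (Δ.term x) (Δ.beg x) [Δ.inv x] :=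
      term_inv x ▸ isWalk_singleton (Δ.inv x)
    simpa using ih.append hx

theorem IsReduced.reverse (h : Δ.IsReduced l) : Δ.IsReduced (l.map Δ.inv).reverse := by
  rw [IsReduced, List.isChain_reverse, List.isChain_map]
  exact h.imp fun a b hab e => hab (by rw [e, Δ.inv_inv])

theorem isReduced_append_singleton_iff :
    Δ.IsReduced (l ++ [x]) ↔ Δ.IsReduced l ∧ ∀ y ∈ l.getLast?, x ≠ Δ.inv y := by
  simp [IsReduced, List.isChain_append]

theorem IsWalk.exists_isReduced (h : Δ.IsWalk u v l) :
    ∃ r, Δ.IsWalk u v r ∧ Δ.IsReduced r ∧ r ⊆ l := by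
  induction h with
  | nil v => exact ⟨[], .nil v, .nil, List.nil_subset _⟩
  | cons x _ ih =>
    obtain ⟨r, hr, hred, hsub⟩ := ih
    cases r with
    | nil => exact ⟨[x], .cons x hr, .singleton x, List.cons_subset_cons x hsub⟩
    | cons y r =>
      by_cases hy : y = Δ.inv x
      · subst hy
        obtain ⟨-, hr⟩ := isWalk_cons_iff.1 hr
        exact ⟨r, term_inv x ▸ hr, List.IsChain.tail hred,
          fun z hz => .tail x (hsub (.tail _ hz))⟩
      · exact ⟨x :: y :: r, .cons x hr, List.isChain_cons_cons.2 ⟨hy, hred⟩,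
          List.cons_subset_cons x hsub⟩

theorem IsReducedWalkIn.tail (h : Δ.IsReducedWalkIn S u v (x :: l)) :
    Δ.IsReducedWalkIn S (Δ.term x) v l :=
  ⟨(isWalk_cons_iff.1 h.1).2, List.IsChain.tail h.2.1, fun z hz => h.2.2 z (.tail x hz)⟩

end PreGraph

namespace IsSpanningTree

open PreGraph

variable {V D : Type*} {Δ : PreGraph V D} {S : Set D}

theorem exists_isReducedWalkIn (hS : IsSpanningTree Δ S) (u v : V) :
    ∃ r, Δ.IsReducedWalkIn S u v r := by
  obtain ⟨l, hl, hlS⟩ := hS.2.1 u v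
  obtain ⟨r, hr, hred, hsub⟩ := IsWalk.exists_isReduced hl
  exact ⟨r, hr, hred, fun x hx => hlS x (hsub hx)⟩

theorem isReducedWalkIn_unique (hS : IsSpanningTree Δ S) {u v : V} {r r' : List D}
    (h : Δ.IsReducedWalkIn S u v r) (h' : Δ.IsReducedWalkIn S u v r') : r = r' := by
  induction r generalizing u r' with
  | nil =>
    obtain rfl := h.1.eq_of_nil
    exact (hS.2.2 u r' h'.1 h'.2.1 h'.2.2).symm
  | cons x t ih =>
    cases r' with
    | nil =>
      obtain rfl := h'.1.eq_of_nil
      exact hS.2.2 u _ h.1 h.2.1 h.2.2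
    | cons y t' =>
      obtain ⟨rfl, -⟩ := isWalk_cons_iff.1 h.1
      obtain rfl : x = y := by
        by_contra hne
        -- going back along `x :: t` and out along `y :: t'` is a closed reduced walk
        have hred : Δ.IsReduced (((x :: t).map Δ.inv).reverse ++ y :: t') := by
          refine List.isChain_append.2 ⟨h.2.1.reverse, h'.2.1, ?_⟩
          simpa [Δ.inv_inv] using fun e => hne e.symm
        have hmem : ∀ z ∈ ((x :: t).map Δ.inv).reverse ++ y :: t', z ∈ S := by
          simp only [List.mem_append, List.mem_reverse, List.mem_map]
          rintro z (⟨z, hz, rfl⟩ | hz)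
          exacts [hS.1 z (h.2.2 z hz), h'.2.2 z hz]
        simpa using hS.2.2 v _ (h.1.reverse.append h'.1) hred hmem
      rw [ih h.tail h'.tail]

theorem eq_append_or_eq_append (hS : IsSpanningTree Δ S) {u : V} {x : D} {r₁ r₂ : List D}
    (hx : x ∈ S) (h₁ : Δ.IsReducedWalkIn S u (Δ.beg x) r₁)
    (h₂ : Δ.IsReducedWalkIn S u (Δ.term x) r₂) :
    r₂ = r₁ ++ [x] ∨ r₁ = r₂ ++ [Δ.inv x] := by
  by_cases hred : Δ.IsReduced (r₁ ++ [x])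
  · refine .inl (hS.isReducedWalkIn_unique h₂ ⟨h₁.1.append (isWalk_singleton x), hred, ?_⟩)
    simpa [or_imp, forall_and] using ⟨h₁.2.2, hx⟩
  · right
    rw [isReduced_append_singleton_iff, not_and] at hred
    rcases r₁.eq_nil_or_concat' with rfl | ⟨p, y, rfl⟩
    · exact absurd (by simp) (hred List.IsChain.nil)
    obtain rfl : y = Δ.inv x := by
      have hxy : x = Δ.inv y := by simpa using hred h₁.2.1
      rw [hxy, Δ.inv_inv]
    obtain ⟨w, hp, hw⟩ := h₁.1.of_append
    obtain ⟨rfl, -⟩ := isWalk_cons_iff.1 hw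
    rw [hS.isReducedWalkIn_unique h₂ ⟨hp, (isReduced_append_singleton_iff.1 h₁.2.1).1,
      fun z hz => h₁.2.2 z (List.mem_append_left _ hz)⟩]

end IsSpanningTree

open scoped Pointwise

theorem Subgroup.mem_conj_smul_iff {G : Type*} [Group G] {H : Subgroup G} {c a : G} :
    a ∈ MulAut.conj c • H ↔ c⁻¹ * a * c ∈ H := by
  rw [mem_pointwise_smul_iff_inv_smul_mem, MulAut.smul_def, MulAut.conj_inv_apply]

def QuotientGroup.rightRelConjEquiv {G : Type*} [Group G] (H : Subgroup G) (c : G) :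
    Quotient (rightRel H) ≃ Quotient (rightRel (MulAut.conj c • H)) :=
  Quotient.congr (Equiv.mulLeft c) fun a b => by
    simp only [rightRel_apply, Subgroup.mem_conj_smul_iff, Equiv.coe_mulLeft, mul_inv_rev]
    group

namespace GenVoltage

variable {V D G : Type*} [Group G] {Δ : PreGraph V D}

def CoverIsomorphic (Θ Θ' : GenVoltage V D G Δ) : Prop :=
  ∃ (Φv : Θ.CovV → Θ'.CovV) (Φd : Θ.CovD → Θ'.CovD),
    Function.Bijective Φv ∧ Function.Bijective Φd ∧
    (∀ p, Φv (Θ.covBeg p) = Θ'.covBeg (Φd p)) ∧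
    (∀ p, Φd (Θ.covInv p) = Θ'.covInv (Φd p))

theorem CoverIsomorphic.trans {Θ₁ Θ₂ Θ₃ : GenVoltage V D G Δ} (h₁₂ : CoverIsomorphic Θ₁ Θ₂)
    (h₂₃ : CoverIsomorphic Θ₂ Θ₃) : CoverIsomorphic Θ₁ Θ₃ := by
  obtain ⟨Φv, Φd, hΦv, hΦd, hΦbeg, hΦinv⟩ := h₁₂
  obtain ⟨Ψv, Ψd, hΨv, hΨd, hΨbeg, hΨinv⟩ := h₂₃
  exact ⟨Ψv ∘ Φv, Ψd ∘ Φd, hΨv.comp hΦv, hΨd.comp hΦd,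
    fun p => by simp [hΦbeg, hΨbeg], fun p => by simp [hΦinv, hΨinv]⟩

variable (Θ : GenVoltage V D G Δ)

theorem dmk_eq_dmk_iff {x : D} {a b : G} : Θ.dmk x a = Θ.dmk x b ↔ b * a⁻¹ ∈ Θ.ωd x := by
  rw [dmk, dmk, Sigma.mk.injEq, heq_eq_eq, Quotient.eq, QuotientGroup.rightRel_apply]
  exact and_iff_right rfl

def withVoltage (ζ' : D → G) (hζ' : ∀ x, ζ' x * (Θ.ζ x)⁻¹ ∈ Θ.ωd (Δ.inv x)) :
    GenVoltage V D G Δ where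
  ωv := Θ.ωv
  ωd := Θ.ωd
  ζ := ζ'
  wle := Θ.wle
  wconj x g := by
    have hconj : ζ' x * g * (ζ' x)⁻¹ =
        ζ' x * (Θ.ζ x)⁻¹ * (Θ.ζ x * g * (Θ.ζ x)⁻¹) * (ζ' x * (Θ.ζ x)⁻¹)⁻¹ := by group
    rw [Θ.wconj, hconj, Subgroup.mul_mem_cancel_right _ (inv_mem (hζ' x)),
      Subgroup.mul_mem_cancel_left _ (hζ' x)]
  wcyc x := by
    have hinv := hζ' (Δ.inv x)
    have hmid := (Θ.wconj (Δ.inv x) _).1 (hζ' x)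
    rw [Δ.inv_inv] at hinv hmid
    have hcyc : ζ' (Δ.inv x) * ζ' x = ζ' (Δ.inv x) * (Θ.ζ (Δ.inv x))⁻¹ *
        (Θ.ζ (Δ.inv x) * (ζ' x * (Θ.ζ x)⁻¹) * (Θ.ζ (Δ.inv x))⁻¹) *
        (Θ.ζ (Δ.inv x) * Θ.ζ x) := by group
    rw [hcyc]
    exact mul_mem (mul_mem hinv hmid) (Θ.wcyc x)

theorem coverIsomorphic_withVoltage (ζ' : D → G)
    (hζ' : ∀ x, ζ' x * (Θ.ζ x)⁻¹ ∈ Θ.ωd (Δ.inv x)) :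
    CoverIsomorphic Θ (Θ.withVoltage ζ' hζ') := by
  refine ⟨id, id, Function.bijective_id, Function.bijective_id, fun _ => rfl, ?_⟩
  rintro ⟨x, ⟨g⟩⟩
  change Θ.dmk (Δ.inv x) (Θ.ζ x * g) = Θ.dmk (Δ.inv x) (ζ' x * g)
  rw [dmk_eq_dmk_iff]
  simpa only [mul_inv_rev, mul_assoc, mul_inv_cancel_left] using hζ' x

theorem exists_coverIsomorphic_ζ_eq_one (T : Set D) (hT : ∀ x ∈ T, Θ.ζ x ∈ Θ.ωd (Δ.inv x)) :
    ∃ Θ' : GenVoltage V D G Δ, (∀ x ∈ T, Θ'.ζ x = 1) ∧ CoverIsomorphic Θ Θ' := by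
  classical
  have hζ' : ∀ x, (if x ∈ T then 1 else Θ.ζ x) * (Θ.ζ x)⁻¹ ∈ Θ.ωd (Δ.inv x) := fun x => by
    split_ifs with hx
    · simpa using hT x hx
    · simp
  exact ⟨Θ.withVoltage _ hζ', fun x hx => if_pos hx, Θ.coverIsomorphic_withVoltage _ hζ'⟩

def switch (c : V → G) : GenVoltage V D G Δ where
  ωv v := MulAut.conj (c v) • Θ.ωv v
  ωd x := MulAut.conj (c (Δ.beg x)) • Θ.ωd x
  ζ x := c (Δ.term x) * Θ.ζ x * (c (Δ.beg x))⁻¹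
  wle x := Subgroup.pointwise_smul_le_pointwise_smul_iff.2 (Θ.wle x)
  wconj x g := by
    simp only [Subgroup.mem_conj_smul_iff]
    rw [Θ.wconj]
    change _ ↔ (c (Δ.term x))⁻¹ * _ * c (Δ.term x) ∈ _
    group
  wcyc x := by
    simp only [Subgroup.mem_conj_smul_iff, PreGraph.term_inv]
    simpa only [PreGraph.term, Δ.inv_inv, mul_assoc, inv_mul_cancel_left, inv_mul_cancel,
      mul_one] using Θ.wcyc x

theorem coverIsomorphic_switch (c : V → G) : CoverIsomorphic Θ (Θ.switch c) := by
  let Φv : Θ.CovV ≃ (Θ.switch c).CovV :=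
    .sigmaCongrRight fun v => QuotientGroup.rightRelConjEquiv (Θ.ωv v) (c v)
  let Φd : Θ.CovD ≃ (Θ.switch c).CovD :=
    .sigmaCongrRight fun x => QuotientGroup.rightRelConjEquiv (Θ.ωd x) (c (Δ.beg x))
  refine ⟨Φv, Φd, Φv.bijective, Φd.bijective, ?_, ?_⟩
  · rintro ⟨x, ⟨g⟩⟩
    rfl
  · rintro ⟨x, ⟨g⟩⟩
    refine congrArg (Sigma.mk (Δ.inv x)) (congrArg (Quotient.mk _) ?_)
    change c (Δ.term x) * (Θ.ζ x * g) =
      c (Δ.term x) * Θ.ζ x * (c (Δ.beg x))⁻¹ * (c (Δ.beg x) * g)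
    group

theorem switch_ζ_mem_ωd_inv_iff (c : V → G) (x : D) :
    (Θ.switch c).ζ x ∈ (Θ.switch c).ωd (Δ.inv x) ↔
      Θ.ζ x * (c (Δ.beg x))⁻¹ * c (Δ.term x) ∈ Θ.ωd (Δ.inv x) := by
  change c (Δ.term x) * Θ.ζ x * (c (Δ.beg x))⁻¹ ∈ MulAut.conj (c (Δ.term x)) • _ ↔ _
  rw [Subgroup.mem_conj_smul_iff]
  group

theorem exists_switch_ζ_mem_ωd_inv {S : Set D} (hS : IsSpanningTree Δ S) :
    ∃ c : V → G, ∀ x ∈ S, (Θ.switch c).ζ x ∈ (Θ.switch c).ωd (Δ.inv x) := by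
  rcases isEmpty_or_nonempty V with hV | ⟨⟨v₀⟩⟩
  · exact ⟨isEmptyElim, fun x => isEmptyElim (Δ.beg x)⟩
  choose L hL using hS.exists_isReducedWalkIn v₀
  -- the inverse of the voltage `ζ xₙ * ⋯ * ζ x₁` of the tree path `x₁ ⋯ xₙ` from `v₀` to `v`
  refine ⟨fun v => ((L v).map fun y => (Θ.ζ y)⁻¹).prod, fun x hx => ?_⟩
  rw [switch_ζ_mem_ωd_inv_iff]
  rcases hS.eq_append_or_eq_append hx (hL _) (hL _) with h | h
  · simp [h]
  · have hcyc := Θ.wcyc (Δ.inv x)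
    rw [Δ.inv_inv] at hcyc
    simpa [h, mul_assoc] using hcyc

end GenVoltage

/-- Voltages can be normalised to be trivial on a prescribed spanning tree,
without changing the isomorphism class of the generalised cover. -/
theorem stmt_11 {V D G : Type*} [Group G] {Δ : PreGraph V D}
    (Θ : GenVoltage V D G Δ) (S : Set D) (hS : IsSpanningTree Δ S) :
    ∃ Θ' : GenVoltage V D G Δ,
      (∀ x ∈ S, Θ'.ζ x = 1) ∧
      ∃ (Φv : Θ.CovV → Θ'.CovV) (Φd : Θ.CovD → Θ'.CovD),
        Function.Bijective Φv ∧ Function.Bijective Φd ∧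
        (∀ p, Φv (Θ.covBeg p) = Θ'.covBeg (Φd p)) ∧
        (∀ p, Φd (Θ.covInv p) = Θ'.covInv (Φd p)) := by
  obtain ⟨c, hc⟩ := Θ.exists_switch_ζ_mem_ωd_inv hS
  obtain ⟨Θ', hΘ', hiso⟩ := (Θ.switch c).exists_coverIsomorphic_ζ_eq_one S hc
  exact ⟨Θ', hΘ', (Θ.coverIsomorphic_switch c).trans hiso⟩
end

section
/- In the generalised cover Γ = GenCov(Δ,G,ω,ζ), the set of neighbours of a vertex (u, ω(u)g) is exactly {(term x, ω(term x)·z·g) : x a dart of Δ with beg x = u, z ∈ ζ(x)ω(u)}. -/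
namespace GenVoltage

variable {V D G : Type*} [Group G] {Δ : PreGraph V D} (Θ : GenVoltage V D G Δ)

theorem covBeg_dmk (x : D) (h : G) : Θ.covBeg (Θ.dmk x h) = Θ.vmk (Δ.beg x) h := rfl

theorem covTerm_dmk (x : D) (h : G) :
    Θ.covTerm (Θ.dmk x h) = Θ.vmk (Δ.term x) (Θ.ζ x * h) := rfl

theorem vmk_eq_vmk_iff {v : V} {a b : G} : Θ.vmk v a = Θ.vmk v b ↔ a * b⁻¹ ∈ Θ.ωv v := by
  rw [vmk, vmk, Sigma.mk.inj_iff, heq_eq_eq, Quotient.eq, QuotientGroup.rightRel_apply,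
    ← inv_mem_iff, mul_inv_rev, inv_inv]
  exact and_iff_right rfl

theorem covBeg_eq_vmk_iff (d : Θ.CovD) (u : V) (g : G) :
    Θ.covBeg d = Θ.vmk u g ↔
      ∃ x, Δ.beg x = u ∧ ∃ w ∈ Θ.ωv u, d = Θ.dmk x (w * g) := by
  obtain ⟨x, c⟩ := d
  induction c using Quotient.inductionOn with
  | h h =>
    constructor
    · intro hd
      obtain rfl : Δ.beg x = u := congrArg Sigma.fst hd
      refine ⟨x, rfl, h * g⁻¹, (Θ.vmk_eq_vmk_iff).1 hd, ?_⟩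
      rw [inv_mul_cancel_right]
      rfl
    · rintro ⟨x, rfl, w, hw, hd⟩
      rw [hd, covBeg_dmk, vmk_eq_vmk_iff, mul_inv_cancel_right]
      exact hw

end GenVoltage

open scoped Pointwise in
/-- The neighbours of a vertex `(u, ω(u)g)` of the generalised cover. -/
theorem stmt_12 {V D G : Type*} [Group G] {Δ : PreGraph V D}
    (Θ : GenVoltage V D G Δ) (u : V) (g : G) :
    {q : Θ.CovV | ∃ d : Θ.CovD, Θ.covBeg d = Θ.vmk u g ∧ Θ.covTerm d = q} =
    {q : Θ.CovV | ∃ (x : D) (z : G), Δ.beg x = u ∧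
        z ∈ (Θ.ζ x) • (Θ.ωv u : Set G) ∧ q = Θ.vmk (Δ.term x) (z * g)} := by
  ext q
  constructor
  · rintro ⟨d, hd, rfl⟩
    obtain ⟨x, rfl, w, hw, rfl⟩ := (Θ.covBeg_eq_vmk_iff d u g).1 hd
    exact ⟨x, Θ.ζ x * w, rfl, Set.smul_mem_smul_set hw, by rw [Θ.covTerm_dmk, mul_assoc]⟩
  · rintro ⟨x, _, rfl, ⟨w, hw, rfl⟩, rfl⟩
    refine ⟨Θ.dmk x (w * g), (Θ.covBeg_eq_vmk_iff _ _ g).2 ⟨x, rfl, w, hw, rfl⟩, ?_⟩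
    rw [Θ.covTerm_dmk, ← mul_assoc]
    rfl
end
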